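/- arXiv:math/0612415 — 3 statements merged into one kernel-verified Lean document; each statement's English description precedes it below -/
import Mathlib

section
/- Let K be an algebraically closed field of characteristic 0, let f, g ∈ K[x] be monic with d := deg f ≥ 2 and deg g ≥ 1, and let γ₁, …, γ_{d−1} be the roots of the derivative f′ counted with multiplicity (so f′ = d·∏_{i=1}^{d−1}(x − γ_i)). For a nonconstant P ∈ K[x] define Δ(P) = ∏_{α} P′(α), the product taken over the roots α of P in K counted with multiplicity. Then for every n ≥ 1, Δ(g ∘ f^n) = Δ(g ∘ f^{n−1})^d · ((−1)^{d−1} d)^{dⁿ·deg g} · ∏_{i=1}^{d−1} g(f^n(γ_i)). -/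
/-!
Write `P = Q ∘ f` with `Q = g ∘ f^(n-1)`, so that `P′ = f′ · (Q′ ∘ f)` by the chain rule.
Since `f` maps the roots of `P` onto the roots of `Q`, each hit exactly `d` times, the factor
`Q′ ∘ f` contributes `Δ(Q)^d`. The factor `f′ = d ∏ᵢ (x - γᵢ)` contributes
`d^N ∏ᵢ ∏_α (α - γᵢ) = d^N ∏ᵢ (-1)^N P(γᵢ)`, where `N = deg P` and `P(γᵢ) = g(fⁿ(γᵢ))`.
-/

open Polynomial

/-- The `n`-th iterate of a polynomial, with `f^0 = X`. -/
noncomputable def polyIter {R : Type*} [CommRing R] (f : Polynomial R) : ℕ → Polynomial R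
  | 0 => X
  | n + 1 => f.comp (polyIter f n)

/-- `Δ(P) = ∏_{α root of P, with multiplicity} P′(α)`, the resultant-type
discriminant `R(P, P′)` of a monic polynomial over an algebraically closed field. -/
noncomputable def discProd {K : Type*} [Field K] (P : Polynomial K) : K :=
  (P.roots.map (fun α => Polynomial.eval α (derivative P))).prod

section Iterate

variable {R : Type*} [CommRing R] {f : R[X]}

theorem polyIter_eq_iterate_comp (n : ℕ) : polyIter f n = f.comp^[n] X := by
  induction n with
  | zero => rfl
  | succ n ih => rw [Function.iterate_succ_apply', ← ih, polyIter]

theorem polyIter_succ_eq_comp (n : ℕ) : polyIter f (n + 1) = (polyIter f n).comp f := by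
  induction n with
  | zero => simp [polyIter]
  | succ n ih => exact (congrArg f.comp ih).trans (comp_assoc ..).symm

theorem eval_polyIter (n : ℕ) (x : R) : (polyIter f n).eval x = (fun y => f.eval y)^[n] x := by
  simp [polyIter_eq_iterate_comp]

theorem natDegree_polyIter [IsDomain R] (n : ℕ) :
    (polyIter f n).natDegree = f.natDegree ^ n := by
  simp [polyIter_eq_iterate_comp]

theorem Polynomial.Monic.polyIter [IsDomain R] (hf : f.Monic)
    (hf0 : f.natDegree ≠ 0) (n : ℕ) : (polyIter f n).Monic := by
  induction n with
  | zero => exact monic_X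
  | succ n ih => exact hf.comp ih (by rw [natDegree_polyIter]; exact pow_ne_zero _ hf0)

end Iterate

theorem Multiset.bind_replicate {α : Type*} (s : Multiset α) (k : ℕ) :
    s.bind (Multiset.replicate k) = k • s := by
  induction s using Multiset.induction_on with
  | empty => simp
  | cons a s ih =>
    rw [Multiset.cons_bind, ih, ← Multiset.singleton_add, nsmul_add, Multiset.nsmul_singleton]

section Roots

variable {K : Type*} [Field K] [IsAlgClosed K]

theorem map_eval_roots_sub_C (f : K[X]) (a : K) :
    (f - C a).roots.map (eval · f) = Multiset.replicate f.natDegree a := by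
  refine Multiset.eq_replicate.mpr ⟨?_, ?_⟩
  · rw [Multiset.card_map, IsAlgClosed.card_roots_eq_natDegree, natDegree_sub_C]
  · intro b hb
    obtain ⟨α, hα, rfl⟩ := Multiset.mem_map.mp hb
    simpa [sub_eq_zero] using (mem_roots'.mp hα).2

theorem map_eval_roots_comp {f : K[X]} (hf : 0 < f.natDegree) (p : K[X]) :
    (p.comp f).roots.map (eval · f) = f.natDegree • p.roots := by
  rcases eq_or_ne p 0 with rfl | hp
  · simp
  have hcomp : p.comp f = C p.leadingCoeff * (p.roots.map fun a => f - C a).prod := by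
    conv_lhs => rw [← C_leadingCoeff_mul_prod_multiset_X_sub_C
      (IsAlgClosed.card_roots_eq_natDegree (p := p))]
    simp only [mul_comp, C_comp, multiset_prod_comp, Multiset.map_map, Function.comp_def,
      sub_comp, X_comp]
  have hne : (0 : K[X]) ∉ p.roots.map fun a => f - C a := fun h0 => by
    obtain ⟨a, -, ha⟩ := Multiset.mem_map.mp h0
    exact ne_zero_of_natDegree_gt (n := 0) (by rwa [natDegree_sub_C]) ha
  rw [hcomp, roots_C_mul _ (leadingCoeff_ne_zero.mpr hp), roots_multiset_prod _ hne,
    Multiset.map_bind, Multiset.bind_map]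
  simp only [map_eval_roots_sub_C]
  exact Multiset.bind_replicate _ _

theorem prod_roots_sub_of_monic {P : K[X]} (hP : P.Monic) (c : K) :
    (P.roots.map (· - c)).prod = (-1) ^ P.natDegree * P.eval c := by
  rw [(IsAlgClosed.splits P).eval_eq_prod_roots_of_monic hP,
    ← IsAlgClosed.card_roots_eq_natDegree, ← Multiset.card_map (c - ·), ← Multiset.prod_map_neg,
    Multiset.map_map]
  exact congrArg _ (Multiset.map_congr rfl fun α _ => (neg_sub c α).symm)

theorem prod_roots_eval_C_mul_prod_X_sub_C {ι : Type*} {P : K[X]} (hP : P.Monic) (c : K)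
    (s : Finset ι) (γ : ι → K) :
    (P.roots.map fun α => eval α (C c * ∏ i ∈ s, (X - C (γ i)))).prod =
      ((-1) ^ s.card * c) ^ P.natDegree * ∏ i ∈ s, P.eval (γ i) := by
  simp only [eval_mul, eval_C, eval_prod, eval_sub, eval_X]
  rw [Multiset.prod_map_mul, Multiset.map_const', Multiset.prod_replicate,
    IsAlgClosed.card_roots_eq_natDegree]
  simp only [Finset.prod_eq_multiset_prod]
  rw [Multiset.prod_map_prod_map]
  simp only [prod_roots_sub_of_monic hP, Multiset.prod_map_mul, Multiset.map_const',
    Multiset.prod_replicate, Finset.card_val]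
  ring

theorem discProd_comp {f : K[X]} (hf : 0 < f.natDegree) (Q : K[X]) :
    discProd (Q.comp f) =
      discProd Q ^ f.natDegree * ((Q.comp f).roots.map (eval · (derivative f))).prod := by
  simp only [discProd, derivative_comp, eval_mul, eval_comp, Multiset.prod_map_mul]
  have h : (Q.comp f).roots.map (fun α => eval (eval α f) (derivative Q)) =
      (f.natDegree • Q.roots).map (eval · (derivative Q)) := by
    rw [← map_eval_roots_comp hf, Multiset.map_map]; rfl
  rw [h, Multiset.map_nsmul, Multiset.prod_nsmul, mul_comm]

end Roots

theorem discProd_comp_iter_general {K : Type*} [Field K] [IsAlgClosed K]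
    (f g : Polynomial K) (hf : f.Monic) (hg : g.Monic)
    (d : ℕ) (hd : f.natDegree = d) (hd2 : 2 ≤ d)
    (γ : Fin (d - 1) → K)
    (hcrit : derivative f = C (d : K) * ∏ i, (X - C (γ i)))
    (n : ℕ) (hn : 1 ≤ n) :
    discProd (g.comp (polyIter f n)) =
      discProd (g.comp (polyIter f (n - 1))) ^ d *
        ((-1 : K) ^ (d - 1) * (d : K)) ^ (d ^ n * g.natDegree) *
        ∏ i, Polynomial.eval ((fun x => Polynomial.eval x f)^[n] (γ i)) g := by
  obtain ⟨m, rfl⟩ : ∃ m, n = m + 1 := ⟨n - 1, by omega⟩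
  have hf0 : f.natDegree ≠ 0 := by omega
  have hP : g.comp (polyIter f (m + 1)) = (g.comp (polyIter f m)).comp f := by
    rw [polyIter_succ_eq_comp, comp_assoc]
  have hPmonic : (g.comp (polyIter f (m + 1))).Monic :=
    hg.comp (hf.polyIter hf0 _) (by rw [natDegree_polyIter]; exact pow_ne_zero _ hf0)
  have hPdeg : (g.comp (polyIter f (m + 1))).natDegree = d ^ (m + 1) * g.natDegree := by
    rw [natDegree_comp, natDegree_polyIter, hd, mul_comm]
  rw [Nat.add_sub_cancel, hP, discProd_comp (Nat.pos_of_ne_zero hf0), hd, ← hP, hcrit,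
    prod_roots_eval_C_mul_prod_X_sub_C hPmonic, hPdeg, Finset.card_univ, Fintype.card_fin]
  simp only [eval_comp, eval_polyIter, mul_assoc]

theorem discProd_comp_iter {K : Type*} [Field K] [IsAlgClosed K] [CharZero K]
    (f g : Polynomial K) (hf : f.Monic) (hg : g.Monic)
    (d : ℕ) (hd : f.natDegree = d) (hd2 : 2 ≤ d) (hgdeg : 1 ≤ g.natDegree)
    (γ : Fin (d - 1) → K)
    (hcrit : derivative f = C (d : K) * ∏ i, (X - C (γ i)))
    (n : ℕ) (hn : 1 ≤ n) :
    discProd (g.comp (polyIter f n)) =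
      discProd (g.comp (polyIter f (n - 1))) ^ d *
        ((-1 : K) ^ (d - 1) * (d : K)) ^ (d ^ n * g.natDegree) *
        ∏ i, Polynomial.eval ((fun x => Polynomial.eval x f)^[n] (γ i)) g :=
  discProd_comp_iter_general f g hf hg d hd hd2 γ hcrit n hn
end

section
/- Let f ∈ ℤ[x] be monic and quadratic, and assume f is not the square of a polynomial in ℚ[x]. Let γ ∈ ℚ be the critical point of f and set m = f(γ) − γ ∈ ℚ, so that f = (x − γ)² + γ + m. If |m| > 6 + 3·√(|γ| + 1), then for every n ≥ 3, f^n(γ) is not the square of a rational number. Moreover, if γ ∈ ℤ, then the same conclusion holds under the weaker hypothesis |m| > 1 + √(|γ| + 1). -/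
/-!
Since `f = (x - γ)^2 + γ + m`, the critical orbit is `f^k(γ) = γ + d_k` with `d_0 = 0` and
`d_{k+1} = d_k^2 + m`, so `f^n(γ) = d_{n-1}^2 + μ` where `μ = f(γ) = γ + m`, and `μ ≠ 0` because
`f` is not a square. The bound on `|m|` makes `|d_{n-1}|` large compared with `|μ|`, whereas
`a^2 + c` with `c ≠ 0` can only be a square if `|c|` is at least about `2|a|`. If `γ ∈ ℤ`,
everything is integral and this applies directly. Otherwise `4m` and `4μ` are odd, `d_{i+1} 4^(2^i)`
is an odd integer `E`, and clearing denominators makes `E^2 + 4μ 4^(2^(i+1)-1)` an odd square;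
distinct odd squares differ by more than `2|E|`, which `|d_{i+1}| ≥ (m^2 - |m|)/16 · 4^(2^i)`
rules out.
-/

open Polynomial

lemma Polynomial.Monic.aeval_eq_of_natDegree_eq_two {R A : Type*} [CommSemiring R] [CommSemiring A]
    [Algebra R A] {f : R[X]} (hf : f.Monic) (hdeg : f.natDegree = 2) (x : A) :
    aeval x f = x ^ 2 + algebraMap R A (f.coeff 1) * x + algebraMap R A (f.coeff 0) := by
  have h2 : f.coeff 2 = 1 := hdeg ▸ hf.coeff_natDegree
  rw [aeval_eq_sum_range, hdeg]
  simp [Finset.sum_range_succ, h2, Algebra.smul_def]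
  ring

lemma map_intCast_eq_sq_add_C {f : ℤ[X]} {γ μ : ℚ} (h : ∀ x : ℚ, aeval x f = (x - γ) ^ 2 + μ) :
    f.map (Int.castRingHom ℚ) = (X - C γ) ^ 2 + C μ :=
  Polynomial.funext fun x => by simp [← algebraMap_int_eq, eval_map_algebraMap, h]

def sqAddOrbit {R : Type*} [Semiring R] (m : R) (k : ℕ) : R := (fun y => y ^ 2 + m)^[k] 0

section Orbit

variable {R : Type*}

@[simp]
lemma sqAddOrbit_zero [Semiring R] (m : R) : sqAddOrbit m 0 = 0 := rfl

lemma sqAddOrbit_succ [Semiring R] (m : R) (k : ℕ) :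
    sqAddOrbit m (k + 1) = sqAddOrbit m k ^ 2 + m :=
  Function.iterate_succ_apply' _ k 0

lemma map_sqAddOrbit {S : Type*} [Semiring R] [Semiring S] (φ : R →+* S) (m : R) (k : ℕ) :
    φ (sqAddOrbit m k) = sqAddOrbit (φ m) k := by
  induction k with
  | zero => simp
  | succ k ih => simp [sqAddOrbit_succ, ih]

lemma iterate_eq_add_sqAddOrbit [CommRing R] {g : R → R} {γ m : R}
    (hg : ∀ x, g x = (x - γ) ^ 2 + (γ + m)) (k : ℕ) : g^[k] γ = γ + sqAddOrbit m k := by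
  have hconj : Function.Semiconj (γ + ·) (fun y => y ^ 2 + m) g := fun y => by
    rw [hg]; ring
  simpa [sqAddOrbit] using (hconj.iterate_right k 0).symm

end Orbit

section Growth

variable {R : Type*} [CommRing R] [LinearOrder R] [IsStrictOrderedRing R] {m : R}

lemma le_abs_sqAddOrbit_succ {B : R} {k : ℕ} (hB : 0 ≤ B) (h : B ≤ |sqAddOrbit m k|) :
    B ^ 2 - |m| ≤ |sqAddOrbit m (k + 1)| := by
  have hsq : B ^ 2 ≤ |sqAddOrbit m k ^ 2| := abs_pow (sqAddOrbit m k) 2 ▸ pow_le_pow_left₀ hB h 2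
  rw [sqAddOrbit_succ]
  linarith [abs_sub_abs_le_abs_add (sqAddOrbit m k ^ 2) m]

lemma sq_sub_abs_le_abs_sqAddOrbit (hm : 2 < |m|) {k : ℕ} (hk : 2 ≤ k) :
    m ^ 2 - |m| ≤ |sqAddOrbit m k| := by
  rw [← sq_abs m]
  induction k, hk using Nat.le_induction with
  | base => simpa using le_abs_sqAddOrbit_succ (k := 1) (abs_nonneg m) (by simp [sqAddOrbit_succ])
  | succ k _ ih =>
    have hm' : |m| < |m| ^ 2 - |m| := by nlinarith
    refine le_trans ?_ (le_abs_sqAddOrbit_succ (by linarith) ih)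
    nlinarith

end Growth

lemma div_mul_pow_le_abs_sqAddOrbit {K : Type*} [Field K] [LinearOrder K] [IsStrictOrderedRing K]
    {m : K} (hm : 9 < |m|) {i : ℕ} (hi : 1 ≤ i) :
    (m ^ 2 - |m|) / 16 * 4 ^ 2 ^ i ≤ |sqAddOrbit m (i + 1)| := by
  induction i, hi using Nat.le_induction with
  | base =>
    have := sq_sub_abs_le_abs_sqAddOrbit (m := m) (by linarith) le_rfl
    norm_num at this ⊢
    linarith
  | succ i hi ih =>
    set W := (m ^ 2 - |m|) / 16 with hW
    have hW16 : 16 * W = |m| ^ 2 - |m| := by rw [hW, sq_abs]; ring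
    have hP : (16 : K) ≤ 4 ^ 2 ^ i := by
      calc (16 : K) = 4 ^ 2 ^ 1 := by norm_num
        _ ≤ 4 ^ 2 ^ i := pow_le_pow_right₀ (by norm_num) (Nat.pow_le_pow_right two_pos hi)
    have hmW : |m| ≤ 2 * W := by nlinarith
    have hW3 : 3 ≤ W := by nlinarith
    refine le_trans ?_ (le_abs_sqAddOrbit_succ (by positivity) ih)
    rw [pow_succ, pow_mul]
    have h2 : 2 ≤ (W - 1) * (4 ^ 2 ^ i) ^ 2 := by nlinarith
    nlinarith [mul_le_mul_of_nonneg_left h2 (by linarith : (0 : K) ≤ W)]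

lemma Int.not_isSquare_sq_add_of_abs_lt {a c : ℤ} (hc0 : c ≠ 0) (hc : |c| < 2 * |a| - 1) :
    ¬IsSquare (a ^ 2 + c) := by
  rintro ⟨u, hu⟩
  have h : |u| ^ 2 = |a| ^ 2 + c := by rw [sq_abs, sq_abs, sq, hu]
  rcases lt_trichotomy |u| |a| with hlt | heq | hgt
  · nlinarith [abs_nonneg u, neg_abs_le c]
  · rw [heq] at h
    exact hc0 (by linarith)
  · nlinarith [abs_nonneg a, le_abs_self c]

lemma Int.not_isSquare_sq_add_of_odd {a c : ℤ} (ha : Odd a) (hc : Even c) (hc0 : c ≠ 0)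
    (hca : |c| < 2 * |a| + 2) : ¬IsSquare (a ^ 2 + c) := by
  rintro ⟨u, hu⟩
  have hu' : Odd u := by
    have : Odd (u * u) := hu ▸ ha.pow.add_even hc
    exact (Int.odd_mul.mp this).1
  obtain ⟨s, hs⟩ := odd_abs.mpr hu'
  obtain ⟨t, ht⟩ := odd_abs.mpr ha
  have h : (2 * s + 1) ^ 2 = (2 * t + 1) ^ 2 + c := by rw [← hs, ← ht, sq_abs, sq_abs, sq, hu]
  have hs0 : 0 ≤ s := by have := abs_nonneg u; omega
  have ht0 : 0 ≤ t := by have := abs_nonneg a; omega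
  rw [ht] at hca
  rcases lt_trichotomy s t with hlt | heq | hgt
  · nlinarith [neg_abs_le c]
  · exact hc0 (by subst heq; linarith)
  · nlinarith [le_abs_self c]

lemma sq_mul_lt_sq_sub_of_add_mul_sqrt_lt {a c k x : ℚ} (hk : 0 ≤ k) (hx : 0 ≤ x)
    (h : (c : ℝ) + k * √x < a) : c < a ∧ k ^ 2 * x < (a - c) ^ 2 := by
  have hkx : 0 ≤ (k : ℝ) * √x := by positivity
  have hsq := pow_lt_pow_left₀ (show (k : ℝ) * √x < a - c by linarith) hkx two_ne_zero
  rw [mul_pow, Real.sq_sqrt (by exact_mod_cast hx)] at hsq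
  exact ⟨by exact_mod_cast (show (c : ℝ) < a by linarith), by exact_mod_cast hsq⟩

lemma exists_odd_intCast_eq_sqAddOrbit_mul {m : ℚ} (hM : ∃ M : ℤ, Odd M ∧ (M : ℚ) = 4 * m)
    (i : ℕ) : ∃ E : ℤ, Odd E ∧ (E : ℚ) = sqAddOrbit m (i + 1) * 4 ^ 2 ^ i := by
  obtain ⟨M, hModd, hMm⟩ := hM
  induction i with
  | zero => exact ⟨M, hModd, by simp [sqAddOrbit_succ, hMm, mul_comm]⟩
  | succ i ih =>
    obtain ⟨E, hEodd, hE⟩ := ih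
    have hexp : 2 ^ (i + 1) - 1 ≠ 0 := by have := Nat.one_lt_two_pow (n := i + 1) (by omega); omega
    have hsq4 : (4 : ℚ) ^ 2 ^ (i + 1) = (4 ^ 2 ^ i) ^ 2 := by rw [pow_succ, pow_mul]
    refine ⟨E ^ 2 + M * 4 ^ (2 ^ (i + 1) - 1),
      hEodd.pow.add_even ((by decide : Even (4 : ℤ)).pow_of_ne_zero hexp |>.mul_left M), ?_⟩
    push_cast
    rw [hE, hMm, sqAddOrbit_succ m (i + 1)]
    linear_combination sqAddOrbit m (i + 1) ^ 2 * hsq4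
      + m * mul_pow_sub_one (n := 2 ^ (i + 1)) (pow_ne_zero _ two_ne_zero) (4 : ℚ)

lemma not_isSquare_sqAddOrbit_sq_add_of_odd {γ m : ℚ}
    (hM : ∃ M : ℤ, Odd M ∧ (M : ℚ) = 4 * m) (hN : ∃ N : ℤ, Odd N ∧ (N : ℚ) = 4 * (γ + m))
    (hbound : 6 + 3 * √(|γ| + 1) < ((|m| : ℚ) : ℝ)) {i : ℕ} (hi : 1 ≤ i) :
    ¬IsSquare (sqAddOrbit m (i + 1) ^ 2 + (γ + m)) := by
  obtain ⟨h6, hsq⟩ := sq_mul_lt_sq_sub_of_add_mul_sqrt_lt (a := |m|) (c := 6) (k := 3)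
    (x := |γ| + 1) (by norm_num) (by positivity) (by exact_mod_cast hbound)
  have hm : 9 < |m| := by nlinarith [abs_nonneg γ]
  have hμ : 8 * |γ + m| < m ^ 2 - |m| := by
    nlinarith [abs_add_le γ m, sq_abs m, abs_nonneg γ]
  obtain ⟨E, hEodd, hE⟩ := exists_odd_intCast_eq_sqAddOrbit_mul hM i
  obtain ⟨N, hNodd, hNμ⟩ := hN
  have hexp : 2 ^ (i + 1) - 1 ≠ 0 := by have := Nat.one_lt_two_pow (n := i + 1) (by omega); omega
  have hsq4 : (4 : ℚ) ^ 2 ^ (i + 1) = (4 ^ 2 ^ i) ^ 2 := by rw [pow_succ, pow_mul]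
  have hmul4 : (4 : ℚ) * 4 ^ (2 ^ (i + 1) - 1) = 4 ^ 2 ^ (i + 1) :=
    mul_pow_sub_one (pow_ne_zero _ two_ne_zero) 4
  rintro ⟨q, hq⟩
  have hsqZ : IsSquare (E ^ 2 + N * 4 ^ (2 ^ (i + 1) - 1)) := by
    rw [← Rat.isSquare_intCast_iff]
    refine ⟨q * 4 ^ 2 ^ i, ?_⟩
    push_cast
    rw [hE, hNμ]
    linear_combination (4 ^ 2 ^ i) ^ 2 * hq + (γ + m) * hmul4 + (γ + m) * hsq4
  refine Int.not_isSquare_sq_add_of_odd hEodd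
    ((by decide : Even (4 : ℤ)).pow_of_ne_zero hexp |>.mul_left N)
    (mul_ne_zero (fun h => by simp [h] at hNodd) (by positivity)) ?_ hsqZ
  have hgrow := div_mul_pow_le_abs_sqAddOrbit hm hi
  have hP : (0 : ℚ) < 4 ^ 2 ^ i := by positivity
  have hlt : |(N : ℚ) * 4 ^ (2 ^ (i + 1) - 1)| < 2 * |(E : ℚ)| := by
    rw [hE, hNμ, abs_mul, abs_mul, abs_mul, abs_of_pos hP,
      abs_of_pos (by positivity : (0 : ℚ) < 4 ^ (2 ^ (i + 1) - 1)),
      abs_of_pos (by norm_num : (0 : ℚ) < 4), mul_right_comm, hmul4, hsq4]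
    nlinarith [mul_le_mul_of_nonneg_right hgrow hP.le, mul_lt_mul_of_pos_right hμ (pow_pos hP 2)]
  have : |N * 4 ^ (2 ^ (i + 1) - 1)| < 2 * |E| := by exact_mod_cast hlt
  linarith

lemma not_isSquare_sqAddOrbit_sq_add_of_isInt {γ m : ℚ} (hγ : ∃ z : ℤ, (z : ℚ) = γ)
    (hm : ∃ M : ℤ, (M : ℚ) = m) (hμ : γ + m ≠ 0) (hbound : 1 + √(|γ| + 1) < ((|m| : ℚ) : ℝ))
    {j : ℕ} (hj : 2 ≤ j) : ¬IsSquare (sqAddOrbit m j ^ 2 + (γ + m)) := by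
  obtain ⟨h1, hsq⟩ := sq_mul_lt_sq_sub_of_add_mul_sqrt_lt (a := |m|) (c := 1) (k := 1)
    (x := |γ| + 1) zero_le_one (by positivity) (by simpa using hbound)
  obtain ⟨z, rfl⟩ := hγ
  obtain ⟨M, rfl⟩ := hm
  have hM : 2 < |M| := by
    exact_mod_cast (show (2 : ℚ) < |(M : ℚ)| by nlinarith [abs_nonneg (z : ℚ)])
  have hc : |z + M| < M ^ 2 - |M| := by
    exact_mod_cast (show |(z : ℚ) + M| < (M : ℚ) ^ 2 - |(M : ℚ)| by
      nlinarith [abs_add_le (z : ℚ) M, sq_abs (M : ℚ)])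
  have hgrow := sq_sub_abs_le_abs_sqAddOrbit hM hj
  have hcast := map_sqAddOrbit (Int.castRingHom ℚ) M j
  simp only [eq_intCast] at hcast
  rw [← hcast, ← Int.cast_add, ← Int.cast_pow, ← Int.cast_add, Rat.isSquare_intCast_iff]
  exact Int.not_isSquare_sq_add_of_abs_lt (by exact_mod_cast hμ)
    (by linarith [abs_nonneg (z + M), Int.add_one_le_of_lt (hc.trans_le hgrow)])

theorem critical_orbit_not_square
    (f : Polynomial ℤ) (hf : f.Monic) (hdeg : f.natDegree = 2)
    (hnsq : ¬∃ h : Polynomial ℚ, f.map (Int.castRingHom ℚ) = h ^ 2)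
    (γ m : ℚ) (hγ : γ = -(f.coeff 1 : ℚ) / 2)
    (hm : m = Polynomial.aeval γ f - γ)
    (hbound : ((|m| : ℚ) : ℝ) > 6 + 3 * Real.sqrt (|γ| + 1) ∨
      ((∃ z : ℤ, (z : ℚ) = γ) ∧ ((|m| : ℚ) : ℝ) > 1 + Real.sqrt (|γ| + 1)))
    (n : ℕ) (hn : 3 ≤ n) :
    ¬∃ q : ℚ, q ^ 2 = (fun x : ℚ => Polynomial.aeval x f)^[n] γ := by
  rintro ⟨q, hq⟩
  have heval (x : ℚ) : aeval x f = x ^ 2 + f.coeff 1 * x + f.coeff 0 := by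
    simpa using hf.aeval_eq_of_natDegree_eq_two hdeg x
  have hshape (x : ℚ) : aeval x f = (x - γ) ^ 2 + (γ + m) := by
    rw [hm, heval, heval, hγ]; ring
  have hμ : γ + m ≠ 0 := fun h0 =>
    hnsq ⟨X - C γ, by rw [map_intCast_eq_sq_add_C hshape, h0, C_0, add_zero]⟩
  obtain ⟨i, rfl⟩ : ∃ i, n = i + 2 := ⟨n - 2, by omega⟩
  have hsq : IsSquare (sqAddOrbit m (i + 1) ^ 2 + (γ + m)) :=
    ⟨q, by rw [← sq, hq, iterate_eq_add_sqAddOrbit hshape, sqAddOrbit_succ m (i + 1)]; ring⟩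
  rcases Int.even_or_odd (f.coeff 1) with ⟨t, ht⟩ | ⟨t, ht⟩
  · have hγt : ((-t : ℤ) : ℚ) = γ := by rw [hγ, ht]; push_cast; ring
    refine not_isSquare_sqAddOrbit_sq_add_of_isInt ⟨-t, hγt⟩ ⟨f.coeff 0 - t ^ 2 + t, ?_⟩ hμ ?_
      (by omega) hsq
    · rw [hm, heval, ← hγt, ht]; push_cast; ring
    · exact hbound.elim (fun h => by linarith [Real.sqrt_nonneg (((|γ| : ℚ) : ℝ) + 1)]) And.right
  · refine not_isSquare_sqAddOrbit_sq_add_of_odd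
      ⟨4 * f.coeff 0 - f.coeff 1 ^ 2 + 2 * f.coeff 1, ?_, ?_⟩
      ⟨4 * f.coeff 0 - f.coeff 1 ^ 2, ?_, ?_⟩ ?_ (by omega) hsq
    · exact ⟨2 * f.coeff 0 - 2 * t ^ 2, by rw [ht]; ring⟩
    · rw [hm, heval, hγ]; push_cast; ring
    · exact ⟨2 * f.coeff 0 - 2 * t ^ 2 - 2 * t - 1, by rw [ht]; ring⟩
    · rw [hm, heval, hγ]; push_cast; ring
    · refine hbound.resolve_right fun ⟨⟨z, hz⟩, _⟩ => ?_
      have : (2 * z + 2 * t + 1 : ℤ) = 0 := by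
        exact_mod_cast (show (2 * z + 2 * t + 1 : ℚ) = 0 by rw [hz, hγ, ht]; push_cast; ring)
      omega
end

section
/- Let k ∈ ℤ with k ∉ {0, −1}, let f = x² + k, and set t_n = f^n(0) for n ≥ 1. Then t_n ≠ 0 for all n ≥ 1, and (t_n) is a rigid divisibility sequence: for every prime p and all integers n ≥ 1 and j ≥ 1, if the p-adic valuation v_p(t_n) is positive, then v_p(t_{nj}) = v_p(t_n). -/
private lemma padicValInt_add_eq {p : ℕ} [Fact p.Prime] {x y : ℤ} (hx : x ≠ 0)
    (hv : 0 < padicValInt p x) (hy : (p : ℤ) ^ (padicValInt p x + 1) ∣ y) :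
    padicValInt p (x + y) = padicValInt p x := by
  set v := padicValInt p x with hvdef
  have hnotdvd : ¬ (p : ℤ) ^ (v + 1) ∣ x := by
    rw [padicValInt_dvd_iff]
    push_neg
    exact ⟨hx, by omega⟩
  have hxy : x + y ≠ 0 := by
    intro h
    have hx' : x = -y := by linarith
    exact hnotdvd (hx' ▸ hy.neg_right)
  have h1 : (p : ℤ) ^ v ∣ x + y :=
    dvd_add (padicValInt_dvd x) (dvd_trans (pow_dvd_pow _ (Nat.le_succ v)) hy)
  have h2 : ¬ (p : ℤ) ^ (v + 1) ∣ x + y := by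
    intro h
    exact hnotdvd (by have := dvd_sub h hy; simpa using this)
  rw [padicValInt_dvd_iff] at h1 h2
  push_neg at h2
  omega

private lemma t_shift (k : ℤ) (t : ℕ → ℤ)
    (ht : ∀ n : ℕ, t n = (fun x : ℤ => x ^ 2 + k)^[n] 0) :
    ∀ b : ℕ, 1 ≤ b → ∀ a : ℕ, ∃ c : ℤ, t (a + b) = t b + c * (t a) ^ 2 := by
  have hrec : ∀ m : ℕ, t (m + 1) = (t m) ^ 2 + k := by
    intro m
    rw [ht (m + 1), ht m, Function.iterate_succ_apply']
  intro b hb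
  induction b with
  | zero => omega
  | succ b ih =>
    rcases Nat.eq_or_lt_of_le hb with h | h
    · intro a
      refine ⟨1, ?_⟩
      have hb0 : b = 0 := by omega
      subst hb0
      rw [hrec a, hrec 0, ht 0]
      simp only [Function.iterate_zero_apply]
      ring
    · intro a
      obtain ⟨c, hc⟩ := ih (by omega) a
      refine ⟨c ^ 2 * t a ^ 2 + 2 * t b * c, ?_⟩
      rw [← Nat.add_assoc, hrec (a + b), hrec b, hc]
      ring

theorem rigid_divisibility_X_sq_add_k (k : ℤ) (hk0 : k ≠ 0) (hk1 : k ≠ -1)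
    (t : ℕ → ℤ) (ht : ∀ n : ℕ, t n = (fun x : ℤ => x ^ 2 + k)^[n] 0) :
    (∀ n : ℕ, 1 ≤ n → t n ≠ 0) ∧
    (∀ p : ℕ, p.Prime → ∀ n : ℕ, 1 ≤ n → ∀ j : ℕ, 1 ≤ j →
      0 < padicValInt p (t n) → padicValInt p (t (n * j)) = padicValInt p (t n)) := by
  have hrec : ∀ m : ℕ, t (m + 1) = (t m) ^ 2 + k := by
    intro m
    rw [ht (m + 1), ht m, Function.iterate_succ_apply']
  have ht1 : t 1 = k := by
    rw [hrec 0, ht 0]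
    simp only [Function.iterate_zero_apply]
    ring
  have hnz : ∀ n : ℕ, 1 ≤ n → t n ≠ 0 := by
    rcases lt_or_gt_of_ne hk0 with hneg | hpos
    · -- k ≤ -2
      have hk2 : k ≤ -2 := by omega
      have key : ∀ n : ℕ, 2 ≤ n → -k ≤ t n := by
        intro n hn
        induction n with
        | zero => omega
        | succ m ih =>
          rcases Nat.lt_or_ge m 2 with h | h
          · have hm : m = 1 := by omega
            subst hm
            rw [hrec 1, ht1]
            nlinarith
          · have := ih (by omega)
            rw [hrec m]
            nlinarith
      intro n hn
      rcases Nat.lt_or_ge n 2 with h | h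
      · have : n = 1 := by omega
        rw [this, ht1]; exact hk0
      · have := key n h; omega
    · -- k ≥ 1
      have key : ∀ n : ℕ, 1 ≤ n → k ≤ t n := by
        intro n hn
        induction n with
        | zero => omega
        | succ m ih =>
          rcases Nat.lt_or_ge m 1 with h | h
          · have : m = 0 := by omega
            subst this; rw [ht1]
          · have := ih h
            rw [hrec m]
            nlinarith
      intro n hn
      have := key n hn
      omega
  refine ⟨hnz, ?_⟩
  intro p hp n hn j hj hv
  haveI : Fact p.Prime := ⟨hp⟩
  induction j with
  | zero => omega
  | succ j ih =>
    rcases Nat.lt_or_ge j 1 with h | h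
    · have : j = 0 := by omega
      subst this; simp
    · have hih := ih h
      obtain ⟨c, hc⟩ := t_shift k t ht n hn (n * j)
      have hnj : t (n * j) ≠ 0 := hnz _ (Nat.one_le_iff_ne_zero.mpr (by positivity))
      have hmul : n * (j + 1) = n * j + n := by ring
      rw [hmul, hc]
      apply padicValInt_add_eq (hnz n hn) hv
      have h1 : (p : ℤ) ^ (padicValInt p (t (n * j))) ∣ t (n * j) := padicValInt_dvd _
      have h2 : (p : ℤ) ^ (padicValInt p (t n) + 1) ∣ t (n * j) ^ 2 := by
        calc (p : ℤ) ^ (padicValInt p (t n) + 1)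
            ∣ (p : ℤ) ^ (2 * padicValInt p (t (n * j))) := by
              apply pow_dvd_pow
              rw [hih]; omega
          _ ∣ t (n * j) ^ 2 := by
              rw [two_mul, pow_add, sq]
              exact mul_dvd_mul h1 h1
      exact Dvd.dvd.mul_left h2 c
end
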